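/- Fix an integer n ≥ 1 and λ ∈ ℂ with |λ| = 1. Then the set P = {κ ∈ ℂ : there exists z ∈ ℂ with E_κ^n(z) = z and (E_κ^n)′(z) = λ} is discrete in ℂ: every κ₀ ∈ P has a neighbourhood U ⊂ ℂ with U ∩ P = {κ₀}. -/

import Mathlib

/-!
The multiplier of an `n`-cycle of `E_κ` is `exp` of the sum `S` of the cycle, so `|λ| = 1`
forces `re S = 0`. Such a cycle must enter the left half-plane; this bounds it in terms of `κ`,
and rules it out altogether when `re κ ≤ -2`, since `E_κ` then maps the left half-plane into
`{re ≤ -1}`.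

Suppose parameters `κₘ ∈ P` accumulate at `κ*`. By boundedness their cycle points `zₘ` converge
along a subsequence to some `z₀`, and since all multipliers equal `λ`, the orbit sums are eventually
equal to `S₀ = S(κ*, z₀)`. The zeros of `g_κ(z) = E_κ^n(z) - z` in a small disc around `z₀` move
holomorphically as a multiset: by the argument principle, contour integrals of `φ · g_κ'/g_κ` are
holomorphic in `κ` and equal to sums of `φ` over these zeros. Taking `φ = log (x - (S - S₀))` for
large real `x` and interpolating in `x` shows that `∏ (S(κ, a) - S₀)` over the zeros `a` is
holomorphic in `κ`. It vanishes at every `κₘ`, hence near `κ*`, so `P` is a neighbourhood of `κ*`.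
The accumulation points of `P` therefore form a clopen subset of `ℂ` that misses `-2`; it is empty.
-/

open Complex Set Metric Filter Topology Function Finset
open scoped ContDiff Real

theorem Int.eq_zero_of_norm_two_pi_I_mul_lt {k : ℤ} (h : ‖2 * π * I * k‖ < 2 * π) : k = 0 := by
  rw [norm_mul, norm_mul, norm_mul, norm_intCast, norm_I, Complex.norm_real, Complex.norm_two,
    Real.norm_of_nonneg Real.pi_pos.le, mul_one] at h
  have : |(k : ℝ)| < 1 := by nlinarith [Real.pi_pos, abs_nonneg (k : ℝ)]
  exact_mod_cast abs_lt_one_iff.mp (by exact_mod_cast this)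

theorem Complex.eq_of_exp_eq_of_norm_sub_lt {x y : ℂ} (h : exp x = exp y)
    (hxy : ‖x - y‖ < 2 * π) : x = y := by
  obtain ⟨k, hk⟩ := exp_eq_exp_iff_exists_int.1 h
  have : k = 0 :=
    Int.eq_zero_of_norm_two_pi_I_mul_lt (by rwa [hk, add_sub_cancel_left, mul_comm] at hxy)
  simpa [this] using hk

theorem Multiset.prod_map_sub_eq_sum_lagrange {F ι : Type*} [Field F] [DecidableEq ι]
    {s : Finset ι} {v : ι → F} (hv : Set.InjOn v s) {w : Multiset F}
    (hw : Multiset.card w < s.card) (y : F) :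
    (w.map (y - ·)).prod = ∑ i ∈ s, (w.map (v i - ·)).prod * (Lagrange.basis s v i).eval y := by
  set p : Polynomial F := (w.map fun t => Polynomial.X - Polynomial.C t).prod
  have heval : ∀ x, p.eval x = (w.map (x - ·)).prod := fun x => by
    simp [p, Polynomial.eval_multiset_prod, Multiset.map_map]
  have hdeg : p.degree < s.card := by
    rw [Polynomial.degree_eq_natDegree (Polynomial.monic_multiset_prod_of_monic _ _
      fun t _ => Polynomial.monic_X_sub_C t).ne_zero,
      Polynomial.natDegree_multiset_prod_X_sub_C_eq_card]
    exact_mod_cast hw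
  rw [← heval, Lagrange.eq_interpolate hv hdeg, Lagrange.interpolate_apply,
    Polynomial.eval_finsetSum]
  simp [heval]

theorem derivedSet_eq_empty_of_accPt_imp_mem_nhds {X : Type*} [TopologicalSpace X]
    [PreconnectedSpace X] [T1Space X] [∀ x : X, (𝓝[≠] x).NeBot] {P : Set X}
    (hP : ∀ x, AccPt x (𝓟 P) → P ∈ 𝓝 x) (hne : P ≠ univ) : derivedSet P = ∅ := by
  have hopen : IsOpen (derivedSet P) := isOpen_iff_mem_nhds.2 fun x hx =>
    (eventually_eventually_nhds.2 (hP x hx)).mono fun y hy =>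
      accPt_iff_frequently_nhdsNE.2 (Eventually.frequently (mem_nhdsWithin_of_mem_nhds hy))
  refine (isClopen_iff.1 ⟨isClosed_derivedSet P, hopen⟩).resolve_right fun huniv => hne ?_
  exact eq_univ_of_forall fun x => mem_of_mem_nhds (hP x (huniv.ge (mem_univ x)))

/-! ### Zeros of holomorphic functions in a disc -/

section ArgumentPrinciple

variable {G : ℂ → ℂ} {c : ℂ} {r R : ℝ}

theorem DifferentiableOn.exists_eq_pow_mul {U : Set ℂ} (hU : IsOpen U)
    (hG : DifferentiableOn ℂ G U) {a : ℂ} (ha : a ∈ U) (hGa : ¬∀ᶠ z in 𝓝 a, G z = 0) :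
    ∃ (m : ℕ) (H : ℂ → ℂ), DifferentiableOn ℂ H U ∧ H a ≠ 0 ∧ ∀ z, G z = (z - a) ^ m * H z := by
  obtain ⟨p, hp⟩ := hG.analyticAt (hU.mem_nhds ha)
  have hdiff : ∀ k, DifferentiableOn ℂ ((swap dslope a)^[k] G) U := fun k => by
    induction k with
    | zero => exact hG
    | succ k ih =>
      rw [iterate_succ_apply']
      exact (differentiableOn_dslope (hU.mem_nhds ha)).2 ih
  exact ⟨p.order, _, hdiff _, hp.iterate_dslope_fslope_ne_zero fun h => hGa
    (hp.locally_zero_iff.2 h), hp.eq_pow_order_mul_iterate_dslope⟩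

theorem not_frequently_eq_zero_of_forall_sphere_ne_zero (hr : 0 ≤ r) (hrR : r < R)
    (hG : DifferentiableOn ℂ G (ball c R)) (hsph : ∀ z ∈ sphere c r, G z ≠ 0) {x : ℂ}
    (hx : x ∈ ball c R) : ¬∃ᶠ z in 𝓝[≠] x, G z = 0 := fun hfreq => by
  obtain ⟨w, hw⟩ := (NormedSpace.sphere_nonempty (x := c)).2 hr
  exact hsph w hw <| (hG.analyticOnNhd isOpen_ball).eqOn_zero_of_preconnected_of_frequently_eq_zero
    (convex_ball c R).isPreconnected hx hfreq (sphere_subset_ball hrR hw)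

theorem finite_setOf_mem_closedBall_and_eq_zero (hr : 0 ≤ r) (hrR : r < R)
    (hG : DifferentiableOn ℂ G (ball c R)) (hsph : ∀ z ∈ sphere c r, G z ≠ 0) :
    {z | z ∈ closedBall c r ∧ G z = 0}.Finite := by
  by_contra hinf
  obtain ⟨x, hx, hacc⟩ := Set.Infinite.exists_accPt_of_subset_isCompact hinf
    (isCompact_closedBall c r) fun z hz => hz.1
  exact not_frequently_eq_zero_of_forall_sphere_ne_zero hr hrR hG hsph
    (closedBall_subset_ball hrR hx) ((accPt_iff_frequently_nhdsNE.1 hacc).mono fun z hz => hz.2)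

theorem circleIntegral_mul_logDeriv_eq_zero {φ : ℂ → ℂ} (hr : 0 ≤ r) (hrR : r < R)
    (hG : DifferentiableOn ℂ G (ball c R)) (hG0 : ∀ z ∈ closedBall c r, G z ≠ 0)
    (hφ : DifferentiableOn ℂ φ (closedBall c r)) :
    ∮ z in C(c, r), φ z * logDeriv G z = 0 := by
  have hsub := closedBall_subset_ball (x := c) hrR
  have hdiff : DifferentiableOn ℂ (fun z => φ z * logDeriv G z) (closedBall c r) :=
    hφ.mul (((hG.deriv isOpen_ball).mono hsub).div (hG.mono hsub) hG0)
  exact (hdiff.mono closure_ball_subset_closedBall).diffContOnCl.circleIntegral_eq_zero hr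

theorem logDeriv_sub_pow_mul {H : ℂ → ℂ} {a z : ℂ} (m : ℕ) (hza : z ≠ a) (hH : H z ≠ 0)
    (hHd : DifferentiableAt ℂ H z) :
    logDeriv (fun w => (w - a) ^ m * H w) z = m / (z - a) + logDeriv H z := by
  have hsub : DifferentiableAt ℂ (fun w => w - a) z := by fun_prop
  rw [logDeriv_mul (f := fun w => (w - a) ^ m) z (pow_ne_zero _ (sub_ne_zero.2 hza)) hH
    (hsub.pow m) hHd, logDeriv_fun_pow hsub, logDeriv_apply, deriv_sub_const, deriv_id'',
    mul_one_div]

theorem circleIntegral_mul_logDeriv_sub_pow_mul {H φ : ℂ → ℂ} {a : ℂ} (hr : 0 < r) (hrR : r < R)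
    (hH : DifferentiableOn ℂ H (ball c R)) (hHsph : ∀ z ∈ sphere c r, H z ≠ 0)
    (ha : a ∈ ball c r) (m : ℕ) (hφ : DifferentiableOn ℂ φ (closedBall c r)) :
    ∮ z in C(c, r), φ z * logDeriv (fun w => (w - a) ^ m * H w) z =
      2 * π * I * (m * φ a) + ∮ z in C(c, r), φ z * logDeriv H z := by
  have hsphR : sphere c r ⊆ ball c R := sphere_subset_ball hrR
  have hφc : ContinuousOn φ (sphere c r) := hφ.continuousOn.mono sphere_subset_closedBall
  have hne : ∀ z ∈ sphere c r, z ≠ a := fun z hz h =>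
    (mem_sphere.1 hz).not_lt (h ▸ mem_ball.1 ha)
  have hsplit : EqOn (fun z => φ z * logDeriv (fun w => (w - a) ^ m * H w) z)
      (fun z => (m : ℂ) • ((z - a)⁻¹ • φ z) + φ z * logDeriv H z) (sphere c r) := fun z hz => by
    simp only [smul_eq_mul]
    rw [logDeriv_sub_pow_mul m (hne z hz) (hHsph z hz)
      (hH.differentiableAt (isOpen_ball.mem_nhds (hsphR hz)))]
    ring
  have hint₁ : CircleIntegrable (fun z => (m : ℂ) • ((z - a)⁻¹ • φ z)) c r :=
    CircleIntegrable.const_smul <| ContinuousOn.circleIntegrable hr.le <|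
      ((continuousOn_id.sub continuousOn_const).inv₀ fun z hz => sub_ne_zero.2 (hne z hz)).smul hφc
  have hint₂ : CircleIntegrable (fun z => φ z * logDeriv H z) c r :=
    ContinuousOn.circleIntegrable hr.le <| hφc.mul <|
      ((hH.deriv isOpen_ball).continuousOn.mono hsphR).div (hH.continuousOn.mono hsphR) hHsph
  rw [circleIntegral.integral_congr hr.le hsplit, circleIntegral.integral_add hint₁ hint₂,
    circleIntegral.integral_smul, hφ.circleIntegral_sub_inv_smul ha, smul_eq_mul, smul_eq_mul]
  ring

/-- The integral identity forces each zero to occur in `M` as often as its multiplicity. -/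
def IsZeroMultisetIn (G : ℂ → ℂ) (c : ℂ) (r : ℝ) (M : Multiset ℂ) : Prop :=
  (∀ z, z ∈ M ↔ z ∈ closedBall c r ∧ G z = 0) ∧
    ∀ φ : ℂ → ℂ, DifferentiableOn ℂ φ (closedBall c r) →
      ∮ z in C(c, r), φ z * logDeriv G z = 2 * π * I * (M.map φ).sum

theorem IsZeroMultisetIn.circleIntegral_logDeriv {M : Multiset ℂ}
    (hM : IsZeroMultisetIn G c r M) :
    ∮ z in C(c, r), logDeriv G z = 2 * π * I * Multiset.card M := by
  simpa using hM.2 (fun _ => 1) (differentiableOn_const 1)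

theorem exists_isZeroMultisetIn (hr : 0 < r) (hrR : r < R) (hG : DifferentiableOn ℂ G (ball c R))
    (hsph : ∀ z ∈ sphere c r, G z ≠ 0) : ∃ M, IsZeroMultisetIn G c r M := by
  classical
  induction hN : (finite_setOf_mem_closedBall_and_eq_zero hr.le hrR hG hsph).toFinset.card
    using Nat.strong_induction_on generalizing G with
  | _ N ih =>
  by_cases hzero : ∀ z ∈ closedBall c r, G z ≠ 0
  · exact ⟨0, by simpa using hzero, fun φ hφ => by
      simpa using circleIntegral_mul_logDeriv_eq_zero hr.le hrR hG hzero hφ⟩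
  push Not at hzero
  obtain ⟨a, hac, hGa⟩ := hzero
  have har : a ∈ ball c r :=
    (mem_closedBall.1 hac).lt_of_ne fun h => hsph a (mem_sphere.2 h) hGa
  have haR : a ∈ ball c R := ball_subset_ball hrR.le har
  obtain ⟨m, H, hHd, hHa, hfac⟩ := hG.exists_eq_pow_mul isOpen_ball haR fun h =>
    not_frequently_eq_zero_of_forall_sphere_ne_zero hr.le hrR hG hsph haR
      (h.filter_mono nhdsWithin_le_nhds).frequently
  have hm : m ≠ 0 := by
    rintro rfl
    exact hHa (by simpa [hGa] using (hfac a).symm)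
  have hzeroG : ∀ z, G z = 0 ↔ z = a ∨ H z = 0 := fun z => by
    simp [hfac, sub_eq_zero, hm]
  have hHsph : ∀ z ∈ sphere c r, H z ≠ 0 := fun z hz h0 => hsph z hz ((hzeroG z).2 (Or.inr h0))
  -- dividing out `(z - a) ^ m` removes the zero `a` and keeps all the others
  have hcard :
      (finite_setOf_mem_closedBall_and_eq_zero hr.le hrR hHd hHsph).toFinset.card < N := by
    rw [← hN]
    refine Finset.card_lt_card ⟨fun z hz => ?_, fun hsub => ?_⟩
    · simp only [Set.Finite.mem_toFinset, mem_ofPred_eq] at hz ⊢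
      exact ⟨hz.1, (hzeroG z).2 (Or.inr hz.2)⟩
    · exact hHa ((Set.Finite.mem_toFinset _).1 (hsub ((Set.Finite.mem_toFinset _).2 ⟨hac, hGa⟩))).2
  obtain ⟨MH, hMH, hintH⟩ := ih _ hcard hHd hHsph rfl
  refine ⟨Multiset.replicate m a + MH, fun z => ?_, fun φ hφ => ?_⟩
  · rw [Multiset.mem_add, Multiset.mem_replicate, hMH, hzeroG]
    constructor
    · rintro (⟨-, rfl⟩ | ⟨hz, hHz⟩)
      exacts [⟨hac, Or.inl rfl⟩, ⟨hz, Or.inr hHz⟩]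
    · rintro ⟨hz, rfl | hHz⟩
      exacts [Or.inl ⟨hm, rfl⟩, Or.inr ⟨hz, hHz⟩]
  rw [show G = fun w => (w - a) ^ m * H w from funext hfac,
    circleIntegral_mul_logDeriv_sub_pow_mul hr hrR hHd hHsph har m hφ, hintH φ hφ]
  simp only [Multiset.map_add, Multiset.sum_add, Multiset.map_replicate, Multiset.sum_replicate,
    nsmul_eq_mul]
  ring

end ArgumentPrinciple

/-! ### Holomorphic dependence on a parameter -/

theorem differentiableAt_circleIntegral_of_contDiffOn {U : Set (ℂ × ℂ)} (hU : IsOpen U)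
    {f : ℂ × ℂ → ℂ} (hf : ContDiffOn ℂ 1 f U) {κ₀ c : ℂ} {r : ℝ} (hr : 0 ≤ r)
    (hsph : ∀ z ∈ sphere c r, (κ₀, z) ∈ U) :
    DifferentiableAt ℂ (fun κ => ∮ z in C(c, r), f (κ, z)) κ₀ := by
  have htube : ∀ᶠ κ in 𝓝 κ₀, ∀ z ∈ sphere c r, (κ, z) ∈ U :=
    (isCompact_sphere c r).eventually_forall_of_forall_eventually fun z hz =>
      hU.mem_nhds (hsph z hz)
  obtain ⟨ε, hε, hεU⟩ := Metric.eventually_nhds_iff.1 htube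
  have hK : closedBall κ₀ (ε / 2) ×ˢ sphere c r ⊆ U := fun p ⟨hp₁, hp₂⟩ =>
    hεU ((mem_closedBall.1 hp₁).trans_lt (half_lt_self hε)) p.2 hp₂
  set f' : ℂ × ℂ → ℂ := fun p => fderiv ℂ f p (1, 0)
  have hf'c : ContinuousOn f' U :=
    (hf.continuousOn_fderiv_of_isOpen hU le_rfl).clm_apply continuousOn_const
  have hderiv : ∀ p ∈ U, HasDerivAt (fun κ => f (κ, p.2)) (f' p) p.1 := fun p hp =>
    ((hf.differentiableOn one_ne_zero p hp).differentiableAt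
      (hU.mem_nhds hp)).hasFDerivAt.comp_hasDerivAt p.1
        ((hasDerivAt_id p.1).prodMk (hasDerivAt_const p.1 p.2))
  obtain ⟨B, hB⟩ := ((isCompact_closedBall κ₀ (ε / 2)).prod
    (isCompact_sphere c r)).exists_bound_of_continuousOn (hf'c.mono hK)
  have hcont : ∀ κ ∈ closedBall κ₀ (ε / 2), Continuous fun θ => f (κ, circleMap c r θ) :=
    fun κ hκ => hf.continuousOn.comp_continuous
      (continuous_const.prodMk (continuous_circleMap c r))
      fun θ => hK ⟨hκ, circleMap_mem_sphere c hr θ⟩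
  have hκ₀ : κ₀ ∈ closedBall κ₀ (ε / 2) := mem_closedBall_self (by positivity)
  have hdc : Continuous fun θ : ℝ => circleMap 0 r θ * I :=
    (continuous_circleMap 0 r).mul continuous_const
  have key := intervalIntegral.hasDerivAt_integral_of_dominated_loc_of_deriv_le
    (F := fun κ θ => (circleMap 0 r θ * I) • f (κ, circleMap c r θ))
    (F' := fun κ θ => (circleMap 0 r θ * I) • f' (κ, circleMap c r θ))
    (bound := fun _ => r * B) (a := 0) (b := 2 * π) (μ := MeasureTheory.volume)
    (ball_mem_nhds κ₀ (half_pos hε))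
    (eventually_of_mem (closedBall_mem_nhds κ₀ (half_pos hε)) fun κ hκ =>
      (hdc.smul (hcont κ hκ)).aestronglyMeasurable)
    ((hdc.smul (hcont κ₀ hκ₀)).intervalIntegrable _ _)
    ((hdc.smul (hf'c.comp_continuous (continuous_const.prodMk (continuous_circleMap c r))
        fun θ => hK ⟨hκ₀, circleMap_mem_sphere c hr θ⟩)).aestronglyMeasurable)
    (Eventually.of_forall fun θ _ κ hκ => ?_) intervalIntegrable_const
    (Eventually.of_forall fun θ _ κ hκ => ?_)
  · simpa only [circleIntegral, deriv_circleMap] using key.2.differentiableAt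
  · rw [norm_smul, norm_mul, norm_circleMap_zero, norm_I, mul_one, abs_of_nonneg hr]
    exact mul_le_mul_of_nonneg_left
      (hB _ ⟨ball_subset_closedBall hκ, circleMap_mem_sphere c hr θ⟩) hr
  · exact (hderiv (κ, circleMap c r θ) (hK ⟨ball_subset_closedBall hκ,
      circleMap_mem_sphere c hr θ⟩)).const_smul (circleMap 0 r θ * I)

/-! ### Common zeros of two holomorphic functions of `(κ, z)` -/

section CommonZeros

variable {g s : ℂ × ℂ → ℂ} {κ₀ z₀ : ℂ} {r : ℝ}

theorem ContDiff.differentiable_snd (hg : ContDiff ℂ ∞ g) (κ : ℂ) :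
    Differentiable ℂ fun z => g (κ, z) :=
  (hg.differentiable (by simp)).comp ((differentiable_const κ).prodMk differentiable_id)

theorem ContDiff.deriv_snd (hg : ContDiff ℂ ∞ g) :
    ContDiff ℂ ∞ fun p : ℂ × ℂ => deriv (fun z => g (p.1, z)) p.2 := by
  have h : ∀ p : ℂ × ℂ, deriv (fun z => g (p.1, z)) p.2 = fderiv ℂ g p (0, 1) := fun p =>
    (((hg.differentiable (by simp)) p).hasFDerivAt.comp_hasDerivAt p.2
      ((hasDerivAt_const p.2 p.1).prodMk (hasDerivAt_id p.2))).deriv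
  simp only [h]
  exact (hg.fderiv_right (by simp)).clm_apply contDiff_const

theorem contDiffOn_logDeriv_snd (hg : ContDiff ℂ ∞ g) :
    ContDiffOn ℂ ∞ (fun p : ℂ × ℂ => logDeriv (fun z => g (p.1, z)) p.2) {p | g p ≠ 0} :=
  hg.deriv_snd.contDiffOn.div hg.contDiffOn fun _ hp => hp

theorem eventually_exists_isZeroMultisetIn (hg : ContDiff ℂ ∞ g) (hr : 0 < r)
    (hsph : ∀ z ∈ sphere z₀ r, g (κ₀, z) ≠ 0) :
    ∀ᶠ κ in 𝓝 κ₀, (∀ z ∈ sphere z₀ r, g (κ, z) ≠ 0) ∧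
      ∃ M, IsZeroMultisetIn (fun z => g (κ, z)) z₀ r M := by
  have hopen : IsOpen {p : ℂ × ℂ | g p ≠ 0} := isOpen_ne_fun hg.continuous continuous_const
  filter_upwards [(isCompact_sphere z₀ r).eventually_forall_of_forall_eventually
    (P := fun κ z => g (κ, z) ≠ 0) fun z hz => hopen.mem_nhds (hsph z hz)] with κ hκ
  exact ⟨hκ, exists_isZeroMultisetIn hr (lt_add_one r) (hg.differentiable_snd κ).differentiableOn
    hκ⟩

theorem exists_eventually_card_eq (hg : ContDiff ℂ ∞ g) (hr : 0 < r)
    (hsph : ∀ z ∈ sphere z₀ r, g (κ₀, z) ≠ 0) :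
    ∃ d : ℕ, ∀ᶠ κ in 𝓝 κ₀, ∀ M, IsZeroMultisetIn (fun z => g (κ, z)) z₀ r M →
      Multiset.card M = d := by
  obtain ⟨-, M₀, hM₀⟩ := (eventually_exists_isZeroMultisetIn hg hr hsph).self_of_nhds
  have hcont : ContinuousAt (fun κ => ∮ z in C(z₀, r), logDeriv (fun w => g (κ, w)) z) κ₀ :=
    (differentiableAt_circleIntegral_of_contDiffOn (isOpen_ne_fun hg.continuous continuous_const)
      ((contDiffOn_logDeriv_snd hg).of_le (by simp)) hr.le hsph).continuousAt
  refine ⟨Multiset.card M₀, ?_⟩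
  filter_upwards [hcont (ball_mem_nhds _ Real.two_pi_pos)] with κ hκ M hM
  rw [Set.mem_preimage, mem_ball, dist_eq_norm, hM.circleIntegral_logDeriv,
    hM₀.circleIntegral_logDeriv, ← mul_sub] at hκ
  have := Int.eq_zero_of_norm_two_pi_I_mul_lt (k := Multiset.card M - Multiset.card M₀)
    (by push_cast; exact hκ)
  omega

theorem sub_mem_slitPlane_of_norm_lt {x : ℝ} {w : ℂ} (h : ‖w‖ < x) : (x : ℂ) - w ∈ slitPlane :=
  Or.inl (by simpa using (re_le_norm w).trans_lt h)

/-- For real `x` larger than `‖s‖`, this is `2πi` times a logarithm of `∏ (x - s (κ, a))` over the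
zeros `a` of `g (κ, ·)` in the disc. -/
noncomputable def logProdIntegral (g s : ℂ × ℂ → ℂ) (z₀ : ℂ) (r x : ℝ) (κ : ℂ) : ℂ :=
  ∮ z in C(z₀, r), log (x - s (κ, z)) * logDeriv (fun w => g (κ, w)) z

theorem eventually_differentiableAt_logProdIntegral (hg : ContDiff ℂ ∞ g) (hs : ContDiff ℂ ∞ s)
    (hr : 0 < r) (hsph : ∀ z ∈ sphere z₀ r, g (κ₀, z) ≠ 0) {x : ℝ}
    (hx : ∀ᶠ κ in 𝓝 κ₀, ∀ z ∈ sphere z₀ r, ‖s (κ, z)‖ < x) :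
    ∀ᶠ κ in 𝓝 κ₀, DifferentiableAt ℂ (logProdIntegral g s z₀ r x) κ := by
  have hU : IsOpen {p : ℂ × ℂ | g p ≠ 0 ∧ (x : ℂ) - s p ∈ slitPlane} :=
    (isOpen_ne_fun hg.continuous continuous_const).inter
      (isOpen_slitPlane.preimage (continuous_const.sub hs.continuous))
  have hf : ContDiffOn ℂ 1 (fun p : ℂ × ℂ => log (x - s p) * logDeriv (fun w => g (p.1, w)) p.2)
      {p | g p ≠ 0 ∧ (x : ℂ) - s p ∈ slitPlane} :=
    (ContDiffOn.mul (fun p hp => ((contDiffAt_log hp.2).comp p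
      (contDiffAt_const.sub hs.contDiffAt)).contDiffWithinAt)
      ((contDiffOn_logDeriv_snd hg).mono fun p hp => hp.1)).of_le (by simp)
  filter_upwards [eventually_exists_isZeroMultisetIn hg hr hsph, hx] with κ hκ hκx
  exact differentiableAt_circleIntegral_of_contDiffOn hU hf hr.le fun z hz =>
    ⟨hκ.1 z hz, sub_mem_slitPlane_of_norm_lt (hκx z hz)⟩

theorem exp_logProdIntegral_div (hs : ContDiff ℂ ∞ s) {κ : ℂ} {x : ℝ}
    (hx : ∀ z ∈ closedBall z₀ r, ‖s (κ, z)‖ < x) {M : Multiset ℂ}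
    (hM : IsZeroMultisetIn (fun z => g (κ, z)) z₀ r M) :
    exp (logProdIntegral g s z₀ r x κ / (2 * π * I)) =
      (M.map fun a => (x : ℂ) - s (κ, a)).prod := by
  have hφ : DifferentiableOn ℂ (fun z => log (x - s (κ, z))) (closedBall z₀ r) := fun z hz =>
    ((differentiableAt_const _).sub ((hs.differentiable (by simp)).comp
      ((differentiable_const κ).prodMk differentiable_id) z)).clog
      (sub_mem_slitPlane_of_norm_lt (hx z hz)) |>.differentiableWithinAt
  rw [logProdIntegral, hM.2 _ hφ, mul_div_cancel_left₀ _ two_pi_I_ne_zero, exp_multiset_sum,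
    Multiset.map_map]
  refine congrArg Multiset.prod (Multiset.map_congr rfl fun a ha => exp_log ?_)
  exact slitPlane_ne_zero (sub_mem_slitPlane_of_norm_lt (hx a ((hM.1 a).1 ha).1))

theorem exists_analyticAt_eq_prod (hg : ContDiff ℂ ∞ g) (hs : ContDiff ℂ ∞ s) (hr : 0 < r)
    (hsph : ∀ z ∈ sphere z₀ r, g (κ₀, z) ≠ 0) :
    ∃ Φ : ℂ → ℂ, AnalyticAt ℂ Φ κ₀ ∧ ∀ᶠ κ in 𝓝 κ₀, ∀ M,
      IsZeroMultisetIn (fun z => g (κ, z)) z₀ r M → Φ κ = (M.map fun a => s (κ, a)).prod := by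
  classical
  obtain ⟨d, hd⟩ := exists_eventually_card_eq hg hr hsph
  obtain ⟨B, hB⟩ := ((isCompact_closedBall κ₀ 1).prod
    (isCompact_closedBall z₀ r)).exists_bound_of_continuousOn hs.continuous.continuousOn
  set v : ℕ → ℝ := fun i => B + 1 + i
  have hvB : ∀ i, ∀ κ ∈ closedBall κ₀ 1, ∀ z ∈ closedBall z₀ r, ‖s (κ, z)‖ < v i :=
    fun i κ hκ z hz => (hB (κ, z) ⟨hκ, hz⟩).trans_lt
      (by simp only [v]; linarith [i.cast_nonneg (α := ℝ)])
  have hv : Set.InjOn (fun i => (v i : ℂ)) (Finset.range (d + 1) : Set ℕ) := fun i _ j _ hij => by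
    simpa [v] using hij
  -- Lagrange interpolation at the nodes `v i` recovers the value at `0` of the polynomial
  -- `∏ (x - s (κ, a))` of degree `d`.
  refine ⟨fun κ => (-1) ^ d * ∑ i ∈ range (d + 1), exp (logProdIntegral g s z₀ r (v i) κ /
    (2 * π * I)) * (Lagrange.basis (range (d + 1)) (fun i => (v i : ℂ)) i).eval 0, ?_, ?_⟩
  · refine analyticAt_iff_eventually_differentiableAt.2 ?_
    filter_upwards [(eventually_all_finset (range (d + 1))).2 fun i _ =>
      eventually_differentiableAt_logProdIntegral hg hs hr hsph <|
        eventually_of_mem (closedBall_mem_nhds κ₀ one_pos) fun κ hκ z hz =>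
          hvB i κ hκ z (sphere_subset_closedBall hz)] with κ hκ
    exact (DifferentiableAt.fun_sum fun i hi =>
      (((hκ i hi).div_const _).cexp).mul_const _).const_mul _
  · filter_upwards [hd, closedBall_mem_nhds κ₀ one_pos] with κ hκd hκ M hM
    have hlag := Multiset.prod_map_sub_eq_sum_lagrange hv
      (w := M.map fun a => s (κ, a)) (by simp [hκd M hM]) 0
    simp only [zero_sub, Multiset.map_map, comp_def] at hlag
    rw [show (M.map fun a => -s (κ, a)) = (M.map fun a => s (κ, a)).map Neg.neg by
      simp [Multiset.map_map], Multiset.prod_map_neg, Multiset.card_map, hκd M hM] at hlag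
    simp only [exp_logProdIntegral_div hs (hvB _ κ hκ) hM]
    rw [← hlag, ← mul_assoc, ← pow_add, ← two_mul, pow_mul, neg_one_sq, one_pow, one_mul]

theorem exists_pos_frequently_imp_eventually_exists_common_zero (hg : ContDiff ℂ ∞ g)
    (hs : ContDiff ℂ ∞ s) (hg₀ : ¬∀ᶠ z in 𝓝 z₀, g (κ₀, z) = 0) :
    ∃ r > 0, (∃ᶠ κ in 𝓝[≠] κ₀, ∃ z ∈ ball z₀ r, g (κ, z) = 0 ∧ s (κ, z) = 0) →
      ∀ᶠ κ in 𝓝 κ₀, ∃ z, g (κ, z) = 0 ∧ s (κ, z) = 0 := by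
  have hne : ∀ᶠ z in 𝓝[≠] z₀, g (κ₀, z) ≠ 0 :=
    ((hg.differentiable_snd κ₀).analyticAt z₀).eventually_eq_zero_or_eventually_ne_zero.resolve_left
      hg₀
  obtain ⟨ε, hε, hball⟩ := Metric.eventually_nhds_iff.1 (eventually_nhdsWithin_iff.1 hne)
  have hr : 0 < ε / 2 := half_pos hε
  have hsph : ∀ z ∈ sphere z₀ (ε / 2), g (κ₀, z) ≠ 0 := fun z hz =>
    hball (by rw [mem_sphere.1 hz]; linarith) (ne_of_mem_sphere hz hr.ne')
  refine ⟨ε / 2, hr, fun hfreq => ?_⟩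
  obtain ⟨Φ, hΦ, hΦeq⟩ := exists_analyticAt_eq_prod hg hs hr hsph
  have hzeros := eventually_exists_isZeroMultisetIn hg hr hsph
  have hΦ0 : ∃ᶠ κ in 𝓝[≠] κ₀, Φ κ = 0 := by
    refine (hfreq.and_eventually (nhdsWithin_le_nhds (hΦeq.and hzeros))).mono ?_
    rintro κ ⟨⟨z, hz, hgz, hsz⟩, hΦκ, -, M, hM⟩
    rw [hΦκ M hM]
    exact Multiset.prod_eq_zero
      (Multiset.mem_map.2 ⟨z, (hM.1 z).2 ⟨ball_subset_closedBall hz, hgz⟩, hsz⟩)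
  filter_upwards [hΦ.frequently_zero_iff_eventually_zero.1 hΦ0, hΦeq, hzeros]
    with κ hΦκ hΦeqκ hκ
  obtain ⟨-, M, hM⟩ := hκ
  obtain ⟨a, ha, hsa⟩ := Multiset.mem_map.1 (Multiset.prod_eq_zero_iff.1 (hΦeqκ M hM ▸ hΦκ))
  exact ⟨a, ((hM.1 a).1 ha).2, hsa⟩

end CommonZeros

/-! ### The exponential family -/

noncomputable def expMap (κ : ℂ) (w : ℂ) : ℂ := exp w + κ

noncomputable def orbitSum (n : ℕ) (κ z : ℂ) : ℂ := ∑ i ∈ range n, (expMap κ)^[i] z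

theorem hasDerivAt_expMap_iterate (j : ℕ) (κ z : ℂ) :
    HasDerivAt (expMap κ)^[j] (exp (orbitSum j κ z)) z := by
  induction j with
  | zero => simpa [orbitSum] using hasDerivAt_id z
  | succ j ih =>
    rw [iterate_succ', orbitSum, sum_range_succ, add_comm, exp_add]
    exact ((hasDerivAt_exp _).comp z ih).add_const κ

theorem contDiff_expMap_iterate (j : ℕ) :
    ContDiff ℂ ∞ fun p : ℂ × ℂ => (expMap p.1)^[j] p.2 := by
  induction j with
  | zero => exact contDiff_snd
  | succ j ih =>
    simp only [iterate_succ_apply', expMap]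
    exact ih.cexp.add contDiff_fst

theorem contDiff_orbitSum (n : ℕ) : ContDiff ℂ ∞ fun p : ℂ × ℂ => orbitSum n p.1 p.2 :=
  ContDiff.sum fun i _ => contDiff_expMap_iterate i

theorem expMap_iterate_add_two_pi_I {n : ℕ} (hn : n ≠ 0) (κ z : ℂ) :
    (expMap κ)^[n] (z + 2 * π * I) = (expMap κ)^[n] z := by
  obtain ⟨m, rfl⟩ := Nat.exists_eq_succ_of_ne_zero hn
  simp only [iterate_succ_apply, expMap, exp_add, exp_two_pi_mul_I, mul_one]

-- `E_κ^n` is `2πi`-periodic, so `E_κ^n(z) - z` is not identically zero.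
theorem not_eventually_expMap_iterate_sub_eq_zero {n : ℕ} (hn : n ≠ 0) (κ z₀ : ℂ) :
    ¬∀ᶠ z in 𝓝 z₀, (expMap κ)^[n] z - z = 0 := fun h => by
  have hdiff : Differentiable ℂ fun z => (expMap κ)^[n] z - z := fun z =>
    (hasDerivAt_expMap_iterate n κ z).differentiableAt.sub differentiableAt_id
  have hzero := hdiff.differentiableOn.analyticOnNhd isOpen_univ
    |>.eqOn_zero_of_preconnected_of_eventuallyEq_zero isPreconnected_univ (mem_univ z₀) h
  have h₀ := hzero (mem_univ 0)
  have h₁ := hzero (mem_univ (0 + 2 * π * I))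
  simp only [Pi.zero_apply, sub_eq_zero, expMap_iterate_add_two_pi_I hn] at h₀ h₁
  exact two_pi_I_ne_zero (by simpa [h₀] using h₁.symm)

theorem norm_expMap_le (κ w : ℂ) : ‖expMap κ w‖ ≤ Real.exp w.re + ‖κ‖ :=
  (norm_add_le _ _).trans_eq (by rw [norm_exp])

theorem norm_expMap_iterate_le {κ w : ℂ} {b C : ℝ} (hw : ‖w‖ ≤ b) (hκ : ‖κ‖ ≤ C) (j : ℕ) :
    ‖(expMap κ)^[j] w‖ ≤ (fun t => Real.exp t + C)^[j] b := by
  induction j with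
  | zero => exact hw
  | succ j ih =>
    rw [iterate_succ_apply', iterate_succ_apply']
    exact (norm_expMap_le _ _).trans
      (add_le_add (Real.exp_le_exp.2 ((re_le_norm _).trans ih)) hκ)

theorem exists_re_expMap_iterate_nonpos {n : ℕ} (hn : n ≠ 0) {κ z : ℂ}
    (h : (orbitSum n κ z).re = 0) : ∃ i < n, ((expMap κ)^[i] z).re ≤ 0 := by
  by_contra! hpos
  have : 0 < (orbitSum n κ z).re := by
    rw [orbitSum, re_sum]
    exact sum_pos (fun i hi => hpos i (mem_range.1 hi)) (nonempty_range_iff.2 hn)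
  exact this.ne' h

theorem norm_le_of_isPeriodicPt {n : ℕ} (hn : n ≠ 0) {κ z : ℂ} {C : ℝ} (hκ : ‖κ‖ ≤ C)
    (hz : IsPeriodicPt (expMap κ) n z) (hre : (orbitSum n κ z).re = 0) :
    ‖z‖ ≤ (fun t => Real.exp t + C)^[n] (1 + C) := by
  obtain ⟨i, hin, hi⟩ := exists_re_expMap_iterate_nonpos hn hre
  have hstart : ‖(expMap κ)^[i + 1] z‖ ≤ 1 + C := by
    rw [iterate_succ_apply']
    exact (norm_expMap_le _ _).trans (add_le_add (Real.exp_le_one_iff.2 hi) hκ)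
  have hmono : Monotone fun j => (fun t => Real.exp t + C)^[j] (1 + C) :=
    Monotone.monotone_iterate_of_le_map (fun a b hab => by simpa using Real.exp_le_exp.2 hab)
      (by linarith [Real.add_one_le_exp (1 + C), (norm_nonneg κ).trans hκ])
  calc ‖z‖ = ‖(expMap κ)^[n - 1 - i] ((expMap κ)^[i + 1] z)‖ := by
        rw [← iterate_add_apply, show n - 1 - i + (i + 1) = n by omega, hz.eq]
    _ ≤ _ := norm_expMap_iterate_le hstart hκ _
    _ ≤ _ := hmono (by omega)

theorem re_expMap_le_neg_one {κ w : ℂ} (hκ : κ.re ≤ -2) (hw : w.re ≤ 0) :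
    (expMap κ w).re ≤ -1 := by
  have : (exp w).re ≤ 1 :=
    (re_le_norm _).trans (by rw [norm_exp]; exact Real.exp_le_one_iff.2 hw)
  simp only [expMap, add_re]
  linarith

theorem re_orbitSum_ne_zero {n : ℕ} (hn : n ≠ 0) {κ z : ℂ} (hκ : κ.re ≤ -2)
    (hz : IsPeriodicPt (expMap κ) n z) : (orbitSum n κ z).re ≠ 0 := by
  intro hre
  obtain ⟨i, hin, hi⟩ := exists_re_expMap_iterate_nonpos hn hre
  have hafter : ∀ j, ((expMap κ)^[i + 1 + j] z).re ≤ -1 := by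
    intro j
    induction j with
    | zero => rw [add_zero, iterate_succ_apply']; exact re_expMap_le_neg_one hκ hi
    | succ j ih =>
      rw [← add_assoc, iterate_succ_apply']
      exact re_expMap_le_neg_one hκ (ih.trans (by norm_num))
  have hall : ∀ k < n, ((expMap κ)^[k] z).re ≤ -1 := fun k hk => by
    have := hafter (k + n - (i + 1))
    rwa [Nat.add_sub_cancel' (by omega), iterate_add_apply, hz.eq] at this
  have : (orbitSum n κ z).re ≤ -n := by
    rw [orbitSum, re_sum]
    simpa using sum_le_sum fun k hk => hall k (mem_range.1 hk)
  have : (0 : ℝ) < n := by exact_mod_cast Nat.pos_of_ne_zero hn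
  linarith

def multiplierLocus (n : ℕ) (lam : ℂ) : Set ℂ :=
  {κ | ∃ z, IsPeriodicPt (expMap κ) n z ∧ exp (orbitSum n κ z) = lam}

theorem re_eq_zero_of_exp_eq {S lam : ℂ} (hlam : ‖lam‖ = 1) (h : exp S = lam) : S.re = 0 :=
  Real.exp_eq_one_iff _ |>.1 (by rw [← norm_exp, h, hlam])

theorem notMem_multiplierLocus {n : ℕ} (hn : n ≠ 0) {lam κ : ℂ} (hlam : ‖lam‖ = 1)
    (hκ : κ.re ≤ -2) : κ ∉ multiplierLocus n lam := fun ⟨_, hz, hexp⟩ =>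
  re_orbitSum_ne_zero hn hκ hz (re_eq_zero_of_exp_eq hlam hexp)

theorem mem_nhds_of_accPt_multiplierLocus {n : ℕ} (hn : n ≠ 0) {lam : ℂ} (hlam : ‖lam‖ = 1)
    {κ₁ : ℂ} (h : AccPt κ₁ (𝓟 (multiplierLocus n lam))) : multiplierLocus n lam ∈ 𝓝 κ₁ := by
  obtain ⟨κs, hκs, hκsP⟩ := exists_seq_forall_of_frequently (accPt_iff_frequently_nhdsNE.1 h)
  choose zs hper hmul using hκsP
  obtain ⟨C, hC⟩ := (isBounded_range_of_tendsto _ (tendsto_nhdsWithin_iff.1 hκs).1).exists_norm_le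
  obtain ⟨z₀, -, φ, hφ, hz⟩ := tendsto_subseq_of_bounded (isBounded_closedBall (x := 0))
    fun m => mem_closedBall_zero_iff.2 <| norm_le_of_isPeriodicPt hn (hC _ (mem_range_self m))
      (hper m) (re_eq_zero_of_exp_eq hlam (hmul m))
  set S₀ := orbitSum n κ₁ z₀
  have hS : Tendsto (fun m => orbitSum n (κs (φ m)) (zs (φ m))) atTop (𝓝 S₀) :=
    ((contDiff_orbitSum n).continuous.tendsto _).comp
      (((tendsto_nhdsWithin_iff.1 hκs).1.comp hφ.tendsto_atTop).prodMk_nhds hz)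
  have hexpS₀ : exp S₀ = lam :=
    tendsto_nhds_unique ((continuous_exp.tendsto _).comp hS) (by simp [comp_def, hmul])
  have hSeq : ∀ᶠ m in atTop, orbitSum n (κs (φ m)) (zs (φ m)) = S₀ :=
    (hS.eventually (ball_mem_nhds S₀ Real.two_pi_pos)).mono fun m hm =>
      eq_of_exp_eq_of_norm_sub_lt (by rw [hmul, hexpS₀]) (by rwa [← dist_eq_norm])
  obtain ⟨r, hr, himp⟩ := exists_pos_frequently_imp_eventually_exists_common_zero
    ((contDiff_expMap_iterate n).sub contDiff_snd)
    ((contDiff_orbitSum n).sub (contDiff_const (c := S₀)))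
    (not_eventually_expMap_iterate_sub_eq_zero hn κ₁ z₀)
  have hfreq : ∃ᶠ κ in 𝓝[≠] κ₁, ∃ z ∈ ball z₀ r,
      (expMap κ)^[n] z - z = 0 ∧ orbitSum n κ z - S₀ = 0 := by
    refine (hκs.comp hφ.tendsto_atTop).frequently (Eventually.frequently ?_)
    filter_upwards [hz.eventually (ball_mem_nhds z₀ hr), hSeq] with m hzm hSm
    exact ⟨zs (φ m), hzm, sub_eq_zero.2 (hper (φ m)), sub_eq_zero.2 hSm⟩
  filter_upwards [himp hfreq] with κ ⟨z, hgz, hsz⟩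
  exact ⟨z, sub_eq_zero.1 hgz, by rw [sub_eq_zero.1 hsz, hexpS₀]⟩

/-- Fix `n ≥ 1` and `λ ∈ ℂ` with `|λ| = 1`. The set
`P = {κ : ∃ z, E_κ^n(z) = z ∧ (E_κ^n)'(z) = λ}` is discrete in `ℂ`: every `κ₀ ∈ P` has
a neighbourhood `U` with `U ∩ P = {κ₀}`. -/
theorem stmt16 (n : ℕ) (hn : 1 ≤ n) (lam : ℂ) (hlam : ‖lam‖ = 1)
    (P : Set ℂ)
    (hP : P = {κ : ℂ | ∃ z : ℂ, (fun w => Complex.exp w + κ)^[n] z = z ∧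
      deriv ((fun w => Complex.exp w + κ)^[n]) z = lam})
    (κ₀ : ℂ) (hκ₀ : κ₀ ∈ P) :
    ∃ U ∈ nhds κ₀, U ∩ P = {κ₀} := by
  have hn₀ : n ≠ 0 := by omega
  have hP' : P = multiplierLocus n lam := by
    subst hP
    ext κ
    exact exists_congr fun z => and_congr Iff.rfl
      (by rw [← (hasDerivAt_expMap_iterate n κ z).deriv]; rfl)
  subst hP'
  have hacc : κ₀ ∉ derivedSet (multiplierLocus n lam) := by
    rw [derivedSet_eq_empty_of_accPt_imp_mem_nhds
      (fun κ => mem_nhds_of_accPt_multiplierLocus hn₀ hlam)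
      fun h => notMem_multiplierLocus hn₀ hlam (κ := -2) (by norm_num) (h ▸ mem_univ _)]
    exact notMem_empty κ₀
  obtain ⟨U, hU, hUP⟩ : ∃ U ∈ 𝓝 κ₀, ∀ κ ∈ U ∩ multiplierLocus n lam, κ = κ₀ := by
    simpa [mem_derivedSet, accPt_iff_nhds] using hacc
  exact ⟨U, hU, eq_singleton_iff_unique_mem.2 ⟨⟨mem_of_mem_nhds hU, hκ₀⟩, hUP⟩⟩
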